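/- arXiv:1804.07248 — 5 statements merged into one kernel-verified Lean document; each statement's English description precedes it below -/
import Mathlib

section
/- Let β ∈ (0,1). Let Q be an ℕ-valued random variable with P(Q = k) = p_β(k) for all k ≥ 1, let (U_i)_{i≥1} be i.i.d. random variables uniformly distributed on [0,1], and suppose that Q, U_1, U_2, … are mutually independent. Then for every Borel set K ⊆ [0,1], the probability that at least one of U_1, …, U_Q lies in K equals Leb(K)^β, i.e. P(∃ i with 1 ≤ i ≤ Q and U_i ∈ K) = Leb(K)^β, where Leb denotes Lebesgue measure. -/
/-!
Since `p_β(k) = (-1)^(k-1) (β choose k)`, the binomial series gives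
`∑_{k ≥ 1} p_β(k) t^k = 1 - (1 - t)^β` for `|t| < 1`; letting `t → 1` shows that `p_β` is a
probability distribution on `{1, 2, …}`. Conditionally on `Q = k`, the probability that one of
`U_1, …, U_k` lies in `K` is `1 - (1 - Leb K)^k`, so the probability in question is
`∑_k p_β(k) (1 - (1 - Leb K)^k) = 1 - (1 - Leb K)^β = Leb(K)^β`.
-/

open MeasureTheory ProbabilityTheory Filter Topology Finset Polynomial

/-- At `k = 0` this formula gives `β`, not a probability; only `k ≥ 1` matters. -/
noncomputable def karlinProb (β : ℝ) (k : ℕ) : ℝ :=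
  β * (∏ j ∈ Finset.range (k - 1), ((j : ℝ) + 1 - β)) / (Nat.factorial k)

lemma Ring.choose_real_eq_prod_div (β : ℝ) (n : ℕ) :
    Ring.choose β n = (∏ j ∈ range n, (β - j)) / n.factorial := by
  rw [Ring.choose_eq_smul, ← aeval_eq_smeval, aeval_def, eval₂_eq_eval_map, descPochhammer_map,
    descPochhammer_eval_eq_prod_range, smul_eq_mul, inv_mul_eq_div]

lemma karlinProb_succ (β : ℝ) (k : ℕ) :
    karlinProb β (k + 1) = (-1) ^ k * Ring.choose β (k + 1) := by
  have hneg : ∏ j ∈ range k, ((j : ℝ) + 1 - β) = (-1) ^ k * ∏ j ∈ range k, (β - (j + 1 : ℕ)) := by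
    have := prod_neg (s := range k) fun j ↦ β - ((j + 1 : ℕ) : ℝ)
    rw [card_range] at this
    rw [← this]
    exact prod_congr rfl fun j _ ↦ by push_cast; ring
  rw [Ring.choose_real_eq_prod_div, prod_range_succ', karlinProb, Nat.add_sub_cancel, hneg]
  push_cast
  ring

lemma karlinProb_nonneg {β : ℝ} (hβ : β ∈ Set.Icc 0 1) (k : ℕ) : 0 ≤ karlinProb β k := by
  have hfactor : ∀ j ∈ range (k - 1), 0 ≤ (j : ℝ) + 1 - β := fun j _ ↦ by
    linarith [hβ.2, j.cast_nonneg (α := ℝ)]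
  have := prod_nonneg hfactor
  have := hβ.1
  unfold karlinProb
  positivity

lemma hasSum_karlinProb_mul_pow (β : ℝ) {t : ℝ} (ht : |t| < 1) :
    HasSum (fun k ↦ karlinProb β (k + 1) * t ^ (k + 1)) (1 - (1 - t) ^ β) := by
  have hbinom : HasSum (fun n ↦ Ring.choose β n * (-t) ^ n) ((1 + -t) ^ β) := by
    have := (Real.one_add_rpow_hasFPowerSeriesOnBall_zero (a := β)).hasSum (y := -t)
      (by simpa [Metric.mem_eball, edist_dist] using ht)
    simpa only [binomialSeries_apply, List.ofFn_const, List.prod_replicate, smul_eq_mul,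
      zero_add] using this
  have hterm : (fun k ↦ karlinProb β (k + 1) * t ^ (k + 1)) =
      fun k ↦ -(Ring.choose β (k + 1) * (-t) ^ (k + 1)) := by
    funext k
    rw [karlinProb_succ, neg_pow t, pow_succ (-1 : ℝ)]
    ring
  have htail := ((hasSum_nat_add_iff' 1).2 hbinom).neg
  rwa [sum_range_one, pow_zero, Ring.choose_zero_right, mul_one, ← sub_eq_add_neg, neg_sub,
    ← hterm] at htail

/-- Both inequalities come from `hasSum_karlinProb_mul_pow` as `t → 1⁻`: the partial sums are
polynomials bounded by `1` on `[0, 1)`, and the full sum dominates `1 - (1 - t)^β`. -/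
lemma hasSum_karlinProb {β : ℝ} (hβ : β ∈ Set.Ioc 0 1) :
    HasSum (fun k ↦ karlinProb β (k + 1)) 1 := by
  have hnonneg : ∀ k, 0 ≤ karlinProb β (k + 1) := fun k ↦
    karlinProb_nonneg (Set.Ioc_subset_Icc_self hβ) _
  have hpow : ∀ {t : ℝ}, t ∈ Set.Ico 0 1 →
      HasSum (fun k ↦ karlinProb β (k + 1) * t ^ (k + 1)) (1 - (1 - t) ^ β) := fun ht ↦
    hasSum_karlinProb_mul_pow β (abs_lt.2 ⟨by linarith [ht.1], ht.2⟩)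
  have hpartial : ∀ n, ∑ k ∈ range n, karlinProb β (k + 1) ≤ 1 := by
    intro n
    have hcont : Continuous fun t : ℝ ↦ ∑ k ∈ range n, karlinProb β (k + 1) * t ^ (k + 1) := by
      fun_prop
    have hle : Set.Ico (0 : ℝ) 1 ⊆ {t | ∑ k ∈ range n, karlinProb β (k + 1) * t ^ (k + 1) ≤ 1} :=
      fun t ht ↦ (sum_le_hasSum _ (fun k _ ↦ mul_nonneg (hnonneg k) (pow_nonneg ht.1 _))
        (hpow ht)).trans (sub_le_self _ (Real.rpow_nonneg (by linarith [ht.2]) _))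
    have hone := (isClosed_le hcont continuous_const).closure_subset_iff.2 hle
      (by rw [closure_Ico zero_ne_one]; exact ⟨zero_le_one, le_rfl⟩)
    simpa using hone
  have hsum := summable_of_sum_range_le hnonneg hpartial
  refine hsum.hasSum_iff.2 (le_antisymm (Real.tsum_le_of_sum_range_le hnonneg hpartial) ?_)
  have hlim : Tendsto (fun t : ℝ ↦ 1 - (1 - t) ^ β) (𝓝[<] 1) (𝓝 1) := by
    have : Continuous fun t : ℝ ↦ 1 - (1 - t) ^ β :=
      continuous_const.sub ((continuous_const.sub continuous_id).rpow_const fun _ ↦ Or.inr hβ.1.le)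
    simpa [Real.zero_rpow hβ.1.ne'] using this.tendsto 1 |>.mono_left nhdsWithin_le_nhds
  refine le_of_tendsto hlim (eventually_of_mem (Ioo_mem_nhdsLT zero_lt_one) fun t ht ↦ ?_)
  exact hasSum_le (fun k ↦ mul_le_of_le_one_right (hnonneg k) (pow_le_one₀ ht.1.le ht.2.le))
    (hpow (Set.Ioo_subset_Ico_self ht)) hsum.hasSum

lemma hasSum_karlinProb_mul_one_sub_pow {β : ℝ} (hβ : β ∈ Set.Ioc 0 1) {x : ℝ}
    (hx : x ∈ Set.Icc 0 1) :
    HasSum (fun k ↦ karlinProb β k * (1 - (1 - x) ^ k)) (x ^ β) := by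
  rcases hx.1.eq_or_lt with rfl | hx0
  · simp [Real.zero_rpow hβ.1.ne']
  refine (hasSum_nat_add_iff' 1).1 ?_
  have h := (hasSum_karlinProb hβ).sub
    (hasSum_karlinProb_mul_pow β (t := 1 - x) (abs_lt.2 ⟨by linarith [hx.2], by linarith⟩))
  convert h using 1
  · ext k; ring
  · simp

lemma ENNReal.one_sub_one_sub_ofReal_pow {x : ℝ} (hx : x ∈ Set.Icc 0 1) (k : ℕ) :
    1 - (1 - ENNReal.ofReal x) ^ k = ENNReal.ofReal (1 - (1 - x) ^ k) := by
  rw [ENNReal.ofReal_sub 1 (pow_nonneg (by linarith [hx.2]) k), ENNReal.ofReal_one,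
    ENNReal.ofReal_pow (by linarith [hx.2]), ENNReal.ofReal_sub 1 hx.1, ENNReal.ofReal_one]

section

variable {Ω α : Type*} [MeasurableSpace Ω] [MeasurableSpace α] {P : Measure Ω}
  {U : ℕ → Ω → α} {K : Set α}

lemma measurableSet_exists_lt_apply_mem (hK : MeasurableSet K) (k : ℕ) :
    MeasurableSet {u : ℕ → α | ∃ i < k, u i ∈ K} := by
  measurability

lemma measure_exists_lt_mem_eq_one_sub_pow [IsProbabilityMeasure P]
    (hU : ∀ i, Measurable (U i)) (hUind : iIndepFun U P) (hK : MeasurableSet K) {q : ENNReal}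
    (hq : ∀ i, P (U i ⁻¹' K) = q) (k : ℕ) :
    P {ω | ∃ i < k, U i ω ∈ K} = 1 - (1 - q) ^ k := by
  have hcompl : {ω | ∃ i < k, U i ω ∈ K} = (⋂ i ∈ range k, U i ⁻¹' Kᶜ)ᶜ := by
    ext ω; simp
  rw [hcompl, prob_compl_eq_one_sub (Finset.measurableSet_biInter _ fun i _ ↦ hU i hK.compl),
    hUind.measure_inter_preimage_eq_mul _ fun i _ ↦ hK.compl]
  simp_rw [Set.preimage_compl, prob_compl_eq_one_sub (hU _ hK), hq, prod_const, card_range]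

lemma measure_exists_lt_mem_eq_tsum {Q : Ω → ℕ} (hQ : Measurable Q) (hU : ∀ i, Measurable (U i))
    (hQU : IndepFun Q (fun ω i ↦ U i ω) P) (hK : MeasurableSet K) :
    P {ω | ∃ i < Q ω, U i ω ∈ K} = ∑' k, P {ω | Q ω = k} * P {ω | ∃ i < k, U i ω ∈ K} := by
  have hevent : {ω | ∃ i < Q ω, U i ω ∈ K} =
      ⋃ k, Q ⁻¹' {k} ∩ (fun ω i ↦ U i ω) ⁻¹' {u | ∃ i < k, u i ∈ K} := by
    ext ω; simp
  have hV : Measurable fun ω i ↦ U i ω := measurable_pi_lambda _ hU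
  rw [hevent, measure_iUnion]
  · exact tsum_congr fun k ↦ hQU.measure_inter_preimage_eq_mul _ _ (measurableSet_singleton k)
      (measurableSet_exists_lt_apply_mem hK k)
  · exact fun k l hkl ↦
      (pairwise_disjoint_fiber Q hkl).mono Set.inter_subset_left Set.inter_subset_left
  · exact fun k ↦
      (hQ (measurableSet_singleton k)).inter (hV (measurableSet_exists_lt_apply_mem hK k))

end

lemma measure_preimage_of_map_eq_uniform {Ω : Type*} [MeasurableSpace Ω]
    {P : Measure Ω} {X : Ω → ℝ} (hX : Measurable X)
    (hlaw : P.map X = volume.restrict (Set.Icc 0 1)) {K : Set ℝ} (hK : MeasurableSet K)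
    (hKsub : K ⊆ Set.Icc 0 1) : P (X ⁻¹' K) = volume K := by
  rw [← Measure.map_apply hX hK, hlaw, Measure.restrict_apply hK, Set.inter_eq_left.2 hKsub]

/-- Let `β ∈ (0,1)`, let `Q` be an `ℕ`-valued random variable with
`P(Q = k) = p_β(k) = β·(1−β)⋯(k−1−β)/k!` for all `k ≥ 1`, let `(U_i)` be i.i.d.
uniform random variables on `[0,1]`, with `Q, U_0, U_1, …` mutually independent
(here `U_0, …, U_{Q-1}` play the role of `U_1, …, U_Q`). Then for every Borel set
`K ⊆ [0,1]`, `P(∃ i < Q, U_i ∈ K) = Leb(K)^β`. -/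
theorem karlin_random_set_capacity
    {Ω : Type*} [MeasurableSpace Ω] (P : Measure Ω) [IsProbabilityMeasure P]
    (β : ℝ) (hβ : β ∈ Set.Ioo (0 : ℝ) 1)
    (Q : Ω → ℕ) (U : ℕ → Ω → ℝ)
    (hQmeas : Measurable Q) (hUmeas : ∀ i, Measurable (U i))
    (hQlaw : ∀ k : ℕ, 1 ≤ k →
      P {ω | Q ω = k}
        = ENNReal.ofReal
            (β * (∏ j ∈ Finset.range (k - 1), ((j : ℝ) + 1 - β)) / (Nat.factorial k)))
    (hUlaw : ∀ i, Measure.map (U i) P = volume.restrict (Set.Icc (0 : ℝ) 1))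
    (hUind : iIndepFun U P)
    (hQU : IndepFun Q (fun ω => fun i => U i ω) P)
    (K : Set ℝ) (hKmeas : MeasurableSet K) (hKsub : K ⊆ Set.Icc (0 : ℝ) 1) :
    P {ω | ∃ i, i < Q ω ∧ U i ω ∈ K}
      = ENNReal.ofReal ((volume K).toReal ^ β) := by
  set x := (volume K).toReal
  have hKle : volume K ≤ 1 := (measure_mono hKsub).trans_eq (by simp [Real.volume_Icc])
  have hx : x ∈ Set.Icc 0 1 :=
    ⟨ENNReal.toReal_nonneg, ENNReal.toReal_le_of_le_ofReal zero_le_one (by simpa using hKle)⟩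
  have hq : ∀ i, P (U i ⁻¹' K) = ENNReal.ofReal x := fun i ↦ by
    rw [measure_preimage_of_map_eq_uniform (hUmeas i) (hUlaw i) hKmeas hKsub,
      ENNReal.ofReal_toReal (ne_top_of_le_ne_top ENNReal.one_ne_top hKle)]
  have hterm : ∀ k, P {ω | Q ω = k} * (1 - (1 - ENNReal.ofReal x) ^ k) =
      ENNReal.ofReal (karlinProb β k * (1 - (1 - x) ^ k)) := by
    rintro (_ | k)
    · simp
    rw [show P {ω | Q ω = k + 1} = ENNReal.ofReal (karlinProb β (k + 1)) from
        hQlaw (k + 1) le_add_self, ENNReal.one_sub_one_sub_ofReal_pow hx,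
      ← ENNReal.ofReal_mul (karlinProb_nonneg (Set.Ioo_subset_Icc_self hβ) _)]
  have hsum := hasSum_karlinProb_mul_one_sub_pow (Set.Ioo_subset_Ioc_self hβ) hx
  have hnonneg : ∀ k, 0 ≤ karlinProb β k * (1 - (1 - x) ^ k) := fun k ↦
    mul_nonneg (karlinProb_nonneg (Set.Ioo_subset_Icc_self hβ) k)
      (sub_nonneg.2 (pow_le_one₀ (by linarith [hx.2]) (by linarith [hx.1])))
  rw [measure_exists_lt_mem_eq_tsum hQmeas hUmeas hQU hKmeas]
  simp_rw [measure_exists_lt_mem_eq_one_sub_pow hUmeas hUind hKmeas hq, hterm]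
  rw [← ENNReal.ofReal_tsum_of_nonneg hnonneg hsum.summable, hsum.tsum_eq]
end

section
/- Let β ∈ (0,1). Let Q be an ℕ-valued random variable with P(Q = k) = p_β(k) for all k ≥ 1, let (U_i)_{i≥1} be i.i.d. random variables uniformly distributed on [0,1], and suppose that Q, U_1, U_2, … are mutually independent. Then the random variable min_{1 ≤ i ≤ Q} U_i has cumulative distribution function t ↦ t^β on [0,1]: for every t ∈ [0,1], P(min_{1 ≤ i ≤ Q} U_i ≤ t) = t^β. -/
/-!
The event `t < min_{i<Q} U_i` is the disjoint union over `k ≥ 1` of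
`{Q = k} ∩ {U_0 > t, …, U_{k-1} > t}`, which by independence has probability `p_β(k) (1 - t)^k`.
Since `p_β(k) = -(β choose k) (-1)^k`, the binomial series gives
`∑_{k ≥ 1} p_β(k) x^k = 1 - (1 - x)^β` for `|x| < 1`; as the weights are nonnegative, the identity
extends to `x = 1` by letting `x → 1⁻`. Taking `x = 1 - t`, `P(min > t) = 1 - t^β`.
-/

open MeasureTheory ProbabilityTheory Finset Filter Topology

theorem Ring.choose_eq_prod_range_div {K : Type*} [Field K] [CharZero K] (a : K) (n : ℕ) :
    Ring.choose a n = (∏ j ∈ range n, (a - j)) / n.factorial := by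
  rw [Ring.choose_eq_smul, smul_eq_mul, ← Polynomial.aeval_eq_smeval, Polynomial.aeval_def,
    Polynomial.eval₂_eq_eval_map, descPochhammer_map, descPochhammer_eval_eq_prod_range,
    inv_mul_eq_div]

theorem hasSum_of_nonneg_of_tendsto_powerSeries_nhdsWithin_lt {f : ℕ → ℝ} {g : ℝ → ℝ} {l : ℝ}
    (hf : ∀ n, 0 ≤ f n) (hfg : ∀ x ∈ Set.Ioo 0 1, HasSum (fun n ↦ f n * x ^ n) (g x))
    (hg : Tendsto g (𝓝[<] 1) (𝓝 l)) : HasSum f l := by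
  have hev : ∀ᶠ x in 𝓝[<] (1 : ℝ), x ∈ Set.Ioo 0 1 := Ioo_mem_nhdsLT zero_lt_one
  have hpartial : ∀ n, ∑ k ∈ range n, f k ≤ l := by
    intro n
    have hpoly : Tendsto (fun x : ℝ ↦ ∑ k ∈ range n, f k * x ^ k) (𝓝[<] 1)
        (𝓝 (∑ k ∈ range n, f k)) := by
      have : Continuous fun x : ℝ ↦ ∑ k ∈ range n, f k * x ^ k := by fun_prop
      simpa using (this.tendsto 1).mono_left nhdsWithin_le_nhds
    refine le_of_tendsto_of_tendsto hpoly hg (hev.mono fun x hx ↦ ?_)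
    exact sum_le_hasSum _ (fun k _ ↦ mul_nonneg (hf k) (pow_nonneg hx.1.le k)) (hfg x hx)
  have hsum : Summable f := summable_of_sum_range_le hf hpartial
  refine hsum.hasSum_iff.2 (le_antisymm (Real.tsum_le_of_sum_range_le hf hpartial) ?_)
  refine le_of_tendsto hg (hev.mono fun x hx ↦ hasSum_le (fun n ↦ ?_) (hfg x hx) hsum.hasSum)
  exact mul_le_of_le_one_right (hf n) (pow_le_one₀ hx.1.le hx.2.le)

/-- The weights `p_β(k)` of the Sibuya distribution; the value at `k = 0` is junk. -/
noncomputable def sibuyaWeight (β : ℝ) (k : ℕ) : ℝ :=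
  β * (∏ j ∈ range (k - 1), ((j : ℝ) + 1 - β)) / (Nat.factorial k)

section Sibuya

variable {β x : ℝ}

theorem sibuyaWeight_nonneg (hβ0 : 0 ≤ β) (hβ1 : β ≤ 1) (k : ℕ) : 0 ≤ sibuyaWeight β k := by
  have : 0 ≤ ∏ j ∈ range (k - 1), ((j : ℝ) + 1 - β) :=
    prod_nonneg fun j _ ↦ by linarith [(j.cast_nonneg : (0 : ℝ) ≤ j)]
  unfold sibuyaWeight
  positivity

theorem sibuyaWeight_succ_eq_neg_choose (β : ℝ) (k : ℕ) :
    sibuyaWeight β (k + 1) = -(Ring.choose β (k + 1) * (-1) ^ (k + 1)) := by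
  have hprod : ∏ j ∈ range k, ((j : ℝ) + 1 - β) = (-1) ^ k * ∏ j ∈ range k, (β - (j + 1 : ℕ)) :=
    calc ∏ j ∈ range k, ((j : ℝ) + 1 - β) = ∏ j ∈ range k, -(β - (j + 1 : ℕ)) :=
          prod_congr rfl fun j _ ↦ by push_cast; ring
      _ = _ := by rw [prod_neg, card_range]
  rw [sibuyaWeight, Ring.choose_eq_prod_range_div, prod_range_succ', Nat.add_sub_cancel, hprod]
  push_cast
  ring

theorem hasSum_sibuyaWeight_mul_pow (β : ℝ) (hx : |x| < 1) :
    HasSum (fun k ↦ sibuyaWeight β (k + 1) * x ^ (k + 1)) (1 - (1 - x) ^ β) := by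
  have hbinom : HasSum (fun n ↦ Ring.choose β n * (-x) ^ n) ((1 - x) ^ β) := by
    have := Real.one_add_rpow_hasFPowerSeriesOnBall_zero (a := β) |>.hasSum (y := -x)
      (by simpa [Metric.mem_eball, edist_dist] using hx)
    simpa [binomialSeries, FormalMultilinearSeries.ofScalars_apply_eq, sub_eq_add_neg,
      mul_comm] using this
  rw [← hasSum_nat_add_iff' 1] at hbinom
  simp only [range_one, sum_singleton, Ring.choose_zero_right, pow_zero, mul_one] at hbinom
  rw [show 1 - (1 - x) ^ β = -((1 - x) ^ β - 1) by ring]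
  refine hbinom.neg.congr_fun fun k ↦ ?_
  rw [sibuyaWeight_succ_eq_neg_choose, neg_pow x]
  ring

theorem hasSum_sibuyaWeight (hβ0 : 0 < β) (hβ1 : β ≤ 1) :
    HasSum (fun k ↦ sibuyaWeight β (k + 1)) 1 := by
  refine hasSum_of_nonneg_of_tendsto_powerSeries_nhdsWithin_lt
    (g := fun x ↦ (1 - (1 - x) ^ β) / x) (fun k ↦ sibuyaWeight_nonneg hβ0.le hβ1 _)
    (fun x hx ↦ ?_) ?_
  · refine ((hasSum_sibuyaWeight_mul_pow β (abs_lt.2 ⟨by linarith [hx.1], hx.2⟩)).div_const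
      x).congr_fun fun k ↦ ?_
    rw [pow_succ, ← mul_assoc, mul_div_cancel_right₀ _ hx.1.ne']
  · have hcont : ContinuousAt (fun x : ℝ ↦ (1 - (1 - x) ^ β) / x) 1 :=
      (continuousAt_const.sub ((Real.continuousAt_rpow_const _ β (Or.inr hβ0.le)).comp
        (continuousAt_const.sub continuousAt_id))).div continuousAt_id one_ne_zero
    simpa [Real.zero_rpow hβ0.ne'] using hcont.tendsto.mono_left nhdsWithin_le_nhds

theorem hasSum_sibuyaWeight_mul_pow_of_mem_Icc (hβ0 : 0 < β) (hβ1 : β ≤ 1)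
    (hx : x ∈ Set.Icc 0 1) :
    HasSum (fun k ↦ sibuyaWeight β (k + 1) * x ^ (k + 1)) (1 - (1 - x) ^ β) := by
  rcases hx.2.lt_or_eq with hx1 | rfl
  · exact hasSum_sibuyaWeight_mul_pow β (abs_lt.2 ⟨by linarith [hx.1], hx1⟩)
  · simpa [Real.zero_rpow hβ0.ne'] using hasSum_sibuyaWeight hβ0 hβ1

end Sibuya

theorem setOf_lt_sInf_image_eq_iUnion {Ω : Type*} (Q : Ω → ℕ) (U : ℕ → Ω → ℝ) {t : ℝ}
    (ht : 0 ≤ t) :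
    {ω | t < sInf ((fun i ↦ U i ω) '' {i | i < Q ω})}
      = ⋃ k, Q ⁻¹' {k + 1} ∩ ⋂ i ∈ range (k + 1), U i ⁻¹' Set.Ioi t := by
  ext ω
  simp only [Set.mem_ofPred_eq, Set.mem_iUnion, Set.mem_inter_iff, Set.mem_preimage,
    Set.mem_singleton_iff, Set.mem_iInter, mem_range, Set.mem_Ioi]
  rcases hQ : Q ω with _ | k
  · simp [Real.sInf_empty, ht]
  · rw [Set.Finite.lt_csInf_iff ((Set.finite_lt_nat _).image _) ⟨_, 0, k.succ_pos, rfl⟩]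
    simp

section Probability

variable {Ω : Type*} [MeasurableSpace Ω] {P : Measure Ω}

theorem ProbabilityTheory.IndepFun.measure_preimage_inter_biInter {α ι γ : Type*}
    [MeasurableSpace α] [MeasurableSpace γ] {Q : Ω → α} {U : ι → Ω → γ}
    (hQU : IndepFun Q (fun ω i ↦ U i ω) P) (hU : iIndepFun U P) {B : Set α}
    (hB : MeasurableSet B) (s : Finset ι) {A : ι → Set γ} (hA : ∀ i ∈ s, MeasurableSet (A i)) :
    P (Q ⁻¹' B ∩ ⋂ i ∈ s, U i ⁻¹' A i) = P (Q ⁻¹' B) * ∏ i ∈ s, P (U i ⁻¹' A i) := by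
  have hcyl : MeasurableSet (⋂ i ∈ s, (fun f : ι → γ ↦ f i) ⁻¹' A i) :=
    s.measurableSet_biInter fun i hi ↦ measurable_pi_apply i (hA i hi)
  have hpre : (fun ω i ↦ U i ω) ⁻¹' (⋂ i ∈ s, (fun f : ι → γ ↦ f i) ⁻¹' A i)
      = ⋂ i ∈ s, U i ⁻¹' A i := by
    ext; simp
  rw [← hpre, hQU.measure_inter_preimage_eq_mul _ _ hB hcyl, hpre,
    hU.meas_biInter fun i hi ↦ ⟨A i, hA i hi, rfl⟩]

theorem measure_preimage_Ioi_of_map_eq_uniform {X : Ω → ℝ} (hX : Measurable X)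
    (hlaw : Measure.map X P = volume.restrict (Set.Icc 0 1)) {t : ℝ} (ht : 0 ≤ t) :
    P (X ⁻¹' Set.Ioi t) = ENNReal.ofReal (1 - t) := by
  have hinter : Set.Ioi t ∩ Set.Icc 0 1 = Set.Ioc t 1 :=
    Set.ext fun s ↦ ⟨fun h ↦ ⟨h.1, h.2.2⟩, fun h ↦ ⟨h.1, ht.trans h.1.le, h.2⟩⟩
  rw [← Measure.map_apply hX measurableSet_Ioi, hlaw, Measure.restrict_apply measurableSet_Ioi,
    hinter, Real.volume_Ioc]

theorem measure_setOf_lt_sInf_image {Q : Ω → ℕ} {U : ℕ → Ω → ℝ} (hQ : Measurable Q)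
    (hU : ∀ i, Measurable (U i)) {t : ℝ} (ht : 0 ≤ t) :
    P {ω | t < sInf ((fun i ↦ U i ω) '' {i | i < Q ω})}
      = ∑' k, P (Q ⁻¹' {k + 1} ∩ ⋂ i ∈ range (k + 1), U i ⁻¹' Set.Ioi t) := by
  rw [setOf_lt_sInf_image_eq_iUnion Q U ht]
  refine measure_iUnion (fun m n hmn ↦ ?_) fun k ↦ ?_
  · exact ((Set.disjoint_singleton.2 (by omega)).preimage Q).mono Set.inter_subset_left
      Set.inter_subset_left
  · exact (hQ (measurableSet_singleton _)).inter
      ((range _).measurableSet_biInter fun i _ ↦ hU i measurableSet_Ioi)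

theorem measurableSet_setOf_lt_sInf_image {Q : Ω → ℕ} {U : ℕ → Ω → ℝ} (hQ : Measurable Q)
    (hU : ∀ i, Measurable (U i)) {t : ℝ} (ht : 0 ≤ t) :
    MeasurableSet {ω | t < sInf ((fun i ↦ U i ω) '' {i | i < Q ω})} := by
  rw [setOf_lt_sInf_image_eq_iUnion Q U ht]
  exact .iUnion fun k ↦ (hQ (measurableSet_singleton _)).inter
    ((range _).measurableSet_biInter fun i _ ↦ hU i measurableSet_Ioi)

end Probability

/-- Let `β ∈ (0,1)`, let `Q` be an `ℕ`-valued random variable with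
`P(Q = k) = p_β(k) = β·(1−β)⋯(k−1−β)/k!` for all `k ≥ 1`, let `(U_i)` be i.i.d.
uniform random variables on `[0,1]`, with `Q, U_0, U_1, …` mutually independent
(here `U_0, …, U_{Q-1}` play the role of `U_1, …, U_Q`; note `Q ≥ 1` a.s., so the
minimum below is a.s. over a nonempty finite set). Then the minimum
`min_{i < Q} U_i` has cumulative distribution function `t ↦ t^β` on `[0,1]`. -/
theorem karlin_random_set_min_cdf
    {Ω : Type*} [MeasurableSpace Ω] (P : Measure Ω) [IsProbabilityMeasure P]
    (β : ℝ) (hβ : β ∈ Set.Ioo (0 : ℝ) 1)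
    (Q : Ω → ℕ) (U : ℕ → Ω → ℝ)
    (hQmeas : Measurable Q) (hUmeas : ∀ i, Measurable (U i))
    (hQlaw : ∀ k : ℕ, 1 ≤ k →
      P {ω | Q ω = k}
        = ENNReal.ofReal
            (β * (∏ j ∈ Finset.range (k - 1), ((j : ℝ) + 1 - β)) / (Nat.factorial k)))
    (hUlaw : ∀ i, Measure.map (U i) P = volume.restrict (Set.Icc (0 : ℝ) 1))
    (hUind : iIndepFun U P)
    (hQU : IndepFun Q (fun ω => fun i => U i ω) P)
    (t : ℝ) (ht : t ∈ Set.Icc (0 : ℝ) 1) :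
    P {ω | sInf ((fun i => U i ω) '' {i | i < Q ω}) ≤ t}
      = ENNReal.ofReal (t ^ β) := by
  obtain ⟨hβ0, hβ1⟩ := hβ
  obtain ⟨ht0, ht1⟩ := ht
  have hpiece : ∀ k, P (Q ⁻¹' {k + 1} ∩ ⋂ i ∈ range (k + 1), U i ⁻¹' Set.Ioi t)
      = ENNReal.ofReal (sibuyaWeight β (k + 1) * (1 - t) ^ (k + 1)) := fun k ↦ by
    have hQk : P (Q ⁻¹' {k + 1}) = ENNReal.ofReal (sibuyaWeight β (k + 1)) :=
      hQlaw (k + 1) (Nat.le_add_left 1 k)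
    rw [hQU.measure_preimage_inter_biInter hUind (measurableSet_singleton _) _
        fun _ _ ↦ measurableSet_Ioi,
      prod_congr rfl fun i _ ↦ measure_preimage_Ioi_of_map_eq_uniform (hUmeas i) (hUlaw i) ht0,
      prod_const, card_range, ← ENNReal.ofReal_pow (by linarith), hQk,
      ← ENNReal.ofReal_mul (sibuyaWeight_nonneg hβ0.le hβ1.le _)]
  have hseries := hasSum_sibuyaWeight_mul_pow_of_mem_Icc hβ0 hβ1.le
    (x := 1 - t) ⟨by linarith, by linarith⟩
  rw [sub_sub_cancel] at hseries
  have hsurvival : P {ω | t < sInf ((fun i ↦ U i ω) '' {i | i < Q ω})}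
      = ENNReal.ofReal (1 - t ^ β) := by
    rw [measure_setOf_lt_sInf_image hQmeas hUmeas ht0, tsum_congr hpiece,
      ← ENNReal.ofReal_tsum_of_nonneg (fun k ↦ mul_nonneg (sibuyaWeight_nonneg hβ0.le hβ1.le _)
        (pow_nonneg (by linarith) _)) hseries.summable, hseries.tsum_eq]
  have hcompl : {ω | sInf ((fun i ↦ U i ω) '' {i | i < Q ω}) ≤ t}
      = {ω | t < sInf ((fun i ↦ U i ω) '' {i | i < Q ω})}ᶜ := by
    ext; simp
  rw [hcompl, prob_compl_eq_one_sub (measurableSet_setOf_lt_sInf_image hQmeas hUmeas ht0),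
    hsurvival, ← ENNReal.ofReal_one,
    ← ENNReal.ofReal_sub _ (sub_nonneg.2 (Real.rpow_le_one ht0 ht1 hβ0.le)), sub_sub_cancel]
end

section
/- Let β ∈ (0,1), let L : (0,∞) → (0,∞) be a measurable function that is slowly varying at infinity (i.e. for every c > 0, L(cx)/L(x) → 1 as x → ∞), and let ν be a Borel measure on (0,∞) with ν((0,x]) = x^β L(x) for all x > 0. Then for every λ > 0, lim_{t→∞} (t^β L(t))^{−1} ∫_{(0,∞)} (1 − e^{−λt/x}) dν(x) = Γ(1−β) λ^β. -/
/-!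
Write `U x = x ^ β * L x = ν (0, x]`. The layer-cake formula turns the integral into
`∫₀^∞ e^{-s} U (λ t / s) ds`, and after dividing by `U t` the integrand tends pointwise to
`e^{-s} (λ / s) ^ β`, whose integral is `Γ(1 - β) λ ^ β`. Dominated convergence applies thanks to
a Potter-type bound: `U` is monotone and, for any `γ ∈ (β, 1)`, eventually `U (2u) ≤ 2 ^ γ U u`,
so `U (c t) ≤ (1 + (2c) ^ γ) U t` for large `t`; and `e^{-s} (1 + (2λ / s) ^ γ)` is integrable
on `(0, ∞)` because `γ < 1`.
-/

open MeasureTheory Filter Set Real Topology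

def RegularlyVarying (U : ℝ → ℝ) (β : ℝ) : Prop :=
  ∀ c > (0 : ℝ), Tendsto (fun t => U (c * t) / U t) atTop (𝓝 (c ^ β))

theorem regularlyVarying_rpow_mul {L : ℝ → ℝ} (hLpos : ∀ x > (0 : ℝ), 0 < L x)
    (hLslow : ∀ c > (0 : ℝ), Tendsto (fun x => L (c * x) / L x) atTop (𝓝 1)) (β : ℝ) :
    RegularlyVarying (fun u => u ^ β * L u) β := by
  intro c hc
  have h := (hLslow c hc).const_mul (c ^ β)
  rw [mul_one] at h
  refine h.congr' ?_
  filter_upwards [eventually_gt_atTop 0] with t ht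
  rw [mul_rpow hc.le ht.le]
  have := (hLpos t ht).ne'
  have := (rpow_pos_of_pos ht β).ne'
  field_simp

theorem RegularlyVarying.eventually_two_mul_le {U : ℝ → ℝ} {β γ : ℝ} (hU : RegularlyVarying U β)
    (hpos : ∀ u > (0 : ℝ), 0 < U u) (hβγ : β < γ) :
    ∀ᶠ u in atTop, U (2 * u) ≤ 2 ^ γ * U u := by
  have hlt : (2 : ℝ) ^ β < 2 ^ γ := rpow_lt_rpow_of_exponent_lt (by norm_num) hβγ
  filter_upwards [(hU 2 two_pos).eventually (eventually_le_nhds hlt), eventually_gt_atTop 0]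
    with u hu hu0
  rwa [div_le_iff₀ (hpos u hu0)] at hu

section Doubling

variable {U : ℝ → ℝ} {γ T : ℝ}

theorem le_two_rpow_pow_mul_of_doubling (hT : 0 ≤ T)
    (hdouble : ∀ u ≥ T, U (2 * u) ≤ 2 ^ γ * U u) (k : ℕ) {u : ℝ} (hu : T ≤ u) :
    U (2 ^ k * u) ≤ (2 ^ γ) ^ k * U u := by
  induction k with
  | zero => simp
  | succ k ih =>
    have hku : T ≤ 2 ^ k * u :=
      hu.trans (le_mul_of_one_le_left (hT.trans hu) (one_le_pow₀ one_le_two))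
    calc U (2 ^ (k + 1) * u) = U (2 * (2 ^ k * u)) := by ring_nf
      _ ≤ 2 ^ γ * U (2 ^ k * u) := hdouble _ hku
      _ ≤ 2 ^ γ * ((2 ^ γ) ^ k * U u) := by gcongr
      _ = (2 ^ γ) ^ (k + 1) * U u := by ring

theorem le_one_add_rpow_mul_of_doubling (hT : 0 ≤ T)
    (hdouble : ∀ u ≥ T, U (2 * u) ≤ 2 ^ γ * U u) (hγ : 0 ≤ γ) (hmono : MonotoneOn U (Ioi 0))
    (hpos : ∀ u > (0 : ℝ), 0 < U u) {t c : ℝ} (ht : T ≤ t) (ht0 : 0 < t) (hc : 0 < c) :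
    U (c * t) ≤ (1 + (2 * c) ^ γ) * U t := by
  rcases le_or_gt c 1 with hc1 | hc1
  · calc U (c * t) ≤ U t :=
          hmono (mul_pos hc ht0) ht0 (mul_le_of_le_one_left ht0.le hc1)
      _ ≤ (1 + (2 * c) ^ γ) * U t :=
          le_mul_of_one_le_left (hpos t ht0).le (le_add_of_nonneg_right (by positivity))
  · obtain ⟨n, hn, hcn⟩ := exists_nat_pow_near hc1.le one_lt_two
    have hpow : (2 : ℝ) ^ (n + 1) ≤ 2 * c := by rw [pow_succ']; gcongr
    calc U (c * t) ≤ U (2 ^ (n + 1) * t) :=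
          hmono (mul_pos hc ht0) (mem_Ioi.2 (by positivity)) (by gcongr)
      _ ≤ (2 ^ γ) ^ (n + 1) * U t := le_two_rpow_pow_mul_of_doubling hT hdouble _ ht
      _ = (2 ^ (n + 1)) ^ γ * U t := by rw [rpow_pow_comm zero_le_two]
      _ ≤ (2 * c) ^ γ * U t := by gcongr; exact (hpos t ht0).le
      _ ≤ (1 + (2 * c) ^ γ) * U t := by gcongr; exact (hpos t ht0).le; linarith

end Doubling

theorem RegularlyVarying.exists_potter_bound {U : ℝ → ℝ} {β γ : ℝ} (hU : RegularlyVarying U β)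
    (hmono : MonotoneOn U (Ioi 0)) (hpos : ∀ u > (0 : ℝ), 0 < U u) (hβγ : β < γ)
    (hγ : 0 ≤ γ) :
    ∃ T > (0 : ℝ), ∀ t ≥ T, ∀ c > (0 : ℝ), U (c * t) ≤ (1 + (2 * c) ^ γ) * U t := by
  obtain ⟨T₀, hT₀⟩ := eventually_atTop.1 (hU.eventually_two_mul_le hpos hβγ)
  refine ⟨max T₀ 1, by positivity, fun t ht c hc => ?_⟩
  have hdouble : ∀ u ≥ max T₀ 1, U (2 * u) ≤ 2 ^ γ * U u :=
    fun u hu => hT₀ u ((le_max_left _ _).trans hu)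
  exact le_one_add_rpow_mul_of_doubling (by positivity) hdouble hγ hmono hpos ht
    (lt_of_lt_of_le (by positivity) ht) hc

theorem exp_neg_mul_div_rpow_eq {a s : ℝ} (ha : 0 ≤ a) (hs : 0 < s) (γ : ℝ) :
    exp (-s) * (a / s) ^ γ = a ^ γ * (exp (-s) * s ^ ((1 - γ) - 1)) := by
  rw [div_rpow ha hs.le, sub_sub_cancel_left, rpow_neg hs.le]
  ring

theorem integrableOn_exp_neg_mul_div_rpow {a γ : ℝ} (ha : 0 ≤ a) (hγ : γ < 1) :
    IntegrableOn (fun s => exp (-s) * (a / s) ^ γ) (Ioi 0) :=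
  IntegrableOn.congr_fun ((GammaIntegral_convergent (sub_pos.2 hγ)).const_mul (a ^ γ))
    (fun _ hs => (exp_neg_mul_div_rpow_eq ha hs γ).symm) measurableSet_Ioi

theorem integral_exp_neg_mul_div_rpow {a γ : ℝ} (ha : 0 ≤ a) (hγ : γ < 1) :
    ∫ s in Ioi 0, exp (-s) * (a / s) ^ γ = Gamma (1 - γ) * a ^ γ := by
  rw [setIntegral_congr_fun measurableSet_Ioi fun _ hs => exp_neg_mul_div_rpow_eq ha hs γ,
    integral_const_mul, Gamma_eq_integral (sub_pos.2 hγ), mul_comm]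

theorem setOf_le_div_inter_Ioi {a s : ℝ} (hs : 0 < s) :
    {x : ℝ | s ≤ a / x} ∩ Ioi 0 = Ioc 0 (a / s) := by
  ext x
  simp only [mem_inter_iff, mem_ofPred_eq, mem_Ioi, mem_Ioc]
  constructor
  · rintro ⟨h, hx⟩
    exact ⟨hx, by rwa [le_div_iff₀ hs, mul_comm, ← le_div_iff₀ hx]⟩
  · rintro ⟨hx, h⟩
    exact ⟨by rwa [le_div_iff₀ hx, mul_comm, ← le_div_iff₀ hs], hx⟩

theorem setLIntegral_one_sub_exp_neg_div (ν : Measure ℝ) {a : ℝ} (ha : 0 < a) :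
    ∫⁻ x in Ioi 0, ENNReal.ofReal (1 - exp (-(a / x))) ∂ν
      = ∫⁻ s in Ioi 0, ν (Ioc 0 (a / s)) * ENNReal.ofReal (exp (-s)) := by
  have hlayer := lintegral_comp_eq_lintegral_meas_le_mul (ν.restrict (Ioi 0))
    (f := fun x => a / x) (g := fun s => exp (-s))
    ((ae_restrict_mem measurableSet_Ioi).mono fun x hx => (div_pos ha hx).le)
    (measurable_const.div measurable_id).aemeasurable
    (fun u _ => (continuous_exp.comp continuous_neg).intervalIntegrable 0 u)
    (Eventually.of_forall fun s => (exp_pos _).le)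
  simp only [intervalIntegral.integral_comp_neg, integral_exp, neg_zero, exp_zero] at hlayer
  rw [hlayer]
  refine setLIntegral_congr_fun measurableSet_Ioi fun s hs => ?_
  rw [Measure.restrict_apply (measurableSet_le measurable_const (by fun_prop)),
    setOf_le_div_inter_Ioi hs]

theorem toReal_setLIntegral_one_sub_exp_neg_div {ν : Measure ℝ} {U : ℝ → ℝ}
    (hν : ∀ x > (0 : ℝ), ν (Ioc 0 x) = ENNReal.ofReal (U x)) (hmeas : Measurable U)
    (hnn : ∀ x > (0 : ℝ), 0 ≤ U x) {a : ℝ} (ha : 0 < a) :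
    (∫⁻ x in Ioi 0, ENNReal.ofReal (1 - exp (-(a / x))) ∂ν).toReal
      = ∫ s in Ioi 0, exp (-s) * U (a / s) := by
  rw [integral_eq_lintegral_of_nonneg_ae, setLIntegral_one_sub_exp_neg_div ν ha]
  · congr 1
    refine setLIntegral_congr_fun measurableSet_Ioi fun s hs => ?_
    rw [hν _ (div_pos ha hs), mul_comm, ENNReal.ofReal_mul (exp_pos _).le]
  · exact (ae_restrict_mem measurableSet_Ioi).mono fun s hs =>
      mul_nonneg (exp_pos _).le (hnn _ (div_pos ha hs))
  · exact (by fun_prop : Measurable fun s => exp (-s) * U (a / s)).aestronglyMeasurable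

theorem monotoneOn_of_measure_Ioc {ν : Measure ℝ} {U : ℝ → ℝ}
    (hν : ∀ x > (0 : ℝ), ν (Ioc 0 x) = ENNReal.ofReal (U x)) (hnn : ∀ x > (0 : ℝ), 0 ≤ U x) :
    MonotoneOn U (Ioi 0) := by
  intro x hx y hy hxy
  have h := measure_mono (μ := ν) (Ioc_subset_Ioc_right hxy : Ioc (0 : ℝ) x ⊆ Ioc 0 y)
  rwa [hν x hx, hν y hy, ENNReal.ofReal_le_ofReal_iff (hnn y hy)] at h

theorem RegularlyVarying.tendsto_integral_exp_neg_mul_div {U : ℝ → ℝ} {β l : ℝ}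
    (hU : RegularlyVarying U β) (hmeas : Measurable U) (hmono : MonotoneOn U (Ioi 0))
    (hpos : ∀ u > (0 : ℝ), 0 < U u) (hβ : β ∈ Ico 0 1) (hl : 0 < l) :
    Tendsto (fun t => ∫ s in Ioi 0, exp (-s) * U (l * t / s) / U t) atTop
      (𝓝 (Gamma (1 - β) * l ^ β)) := by
  obtain ⟨hβ0, hβ1⟩ := hβ
  obtain ⟨T, hT, hbound⟩ := hU.exists_potter_bound hmono hpos (γ := (1 + β) / 2)
    (by linarith) (by linarith)
  rw [← integral_exp_neg_mul_div_rpow hl.le hβ1]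
  refine tendsto_integral_filter_of_dominated_convergence
    (fun s => exp (-s) + exp (-s) * (2 * l / s) ^ ((1 + β) / 2))
    (Eventually.of_forall fun t => (by fun_prop : Measurable _).aestronglyMeasurable) ?_
    ((integrableOn_exp_neg_Ioi 0).add
      (integrableOn_exp_neg_mul_div_rpow (by positivity) (by linarith))) ?_
  · filter_upwards [eventually_ge_atTop T] with t ht
    have ht0 : 0 < t := hT.trans_le ht
    refine (ae_restrict_mem measurableSet_Ioi).mono fun s (hs : 0 < s) => ?_
    have hUt := hpos t ht0
    have hUlts : 0 < U (l * t / s) := hpos _ (by positivity)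
    rw [Real.norm_of_nonneg (by positivity), div_le_iff₀ hUt]
    calc exp (-s) * U (l * t / s) = exp (-s) * U (l / s * t) := by rw [div_mul_eq_mul_div]
      _ ≤ exp (-s) * ((1 + (2 * (l / s)) ^ ((1 + β) / 2)) * U t) := by
          gcongr; exact hbound t ht _ (by positivity)
      _ = (exp (-s) + exp (-s) * (2 * l / s) ^ ((1 + β) / 2)) * U t := by
          rw [mul_div_assoc]; ring
  · refine (ae_restrict_mem measurableSet_Ioi).mono fun s (hs : 0 < s) => ?_
    have h := (hU (l / s) (by positivity)).const_mul (exp (-s))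
    refine h.congr' ((eventually_gt_atTop 0).mono fun t ht => ?_)
    dsimp only
    rw [mul_div_assoc, div_mul_eq_mul_div]

/-- Let `β ∈ (0,1)`, let `L` be a measurable, positive, slowly varying function, and
let `ν` be a Borel measure on `(0,∞)` with `ν((0,x]) = x^β L(x)` for all `x > 0`.
Then for every `λ > 0`,
`lim_{t→∞} (t^β L(t))^{−1} ∫_{(0,∞)} (1 − e^{−λt/x}) dν(x) = Γ(1−β) λ^β`. -/
theorem karlin_regular_variation_integral
    (β : ℝ) (hβ : β ∈ Set.Ioo (0 : ℝ) 1)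
    (L : ℝ → ℝ) (hLmeas : Measurable L) (hLpos : ∀ x > (0 : ℝ), 0 < L x)
    (hLslow : ∀ c > (0 : ℝ), Tendsto (fun x => L (c * x) / L x) atTop (nhds 1))
    (ν : Measure ℝ) (hν : ∀ x > (0 : ℝ), ν (Set.Ioc 0 x) = ENNReal.ofReal (x ^ β * L x))
    (l : ℝ) (hl : 0 < l) :
    Tendsto
      (fun t : ℝ =>
        (∫⁻ x in Set.Ioi (0 : ℝ), ENNReal.ofReal (1 - Real.exp (-(l * t / x))) ∂ν).toReal
          / (t ^ β * L t))
      atTop (nhds (Real.Gamma (1 - β) * l ^ β)) := by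
  have hUpos : ∀ u > (0 : ℝ), 0 < u ^ β * L u := fun u hu =>
    mul_pos (rpow_pos_of_pos hu β) (hLpos u hu)
  have hUmeas : Measurable fun u : ℝ => u ^ β * L u := by fun_prop
  have hUmono := monotoneOn_of_measure_Ioc hν fun u hu => (hUpos u hu).le
  refine ((regularlyVarying_rpow_mul hLpos hLslow β).tendsto_integral_exp_neg_mul_div hUmeas
    hUmono hUpos (Ioo_subset_Ico_self hβ) hl).congr' ?_
  filter_upwards [eventually_gt_atTop 0] with t ht
  rw [integral_div, toReal_setLIntegral_one_sub_exp_neg_div hν hUmeas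
    (fun u hu => (hUpos u hu).le) (mul_pos hl ht)]
end

section
/- Let (B_ℓ)_{ℓ≥1} be independent random variables taking values in {0,1}, set Φ = ∑_{ℓ=1}^∞ E[B_ℓ], assume 0 < Φ < ∞, and let K = ∑_{ℓ=1}^∞ B_ℓ. Then for every real c and every real q ≥ 1, E[(Φ / ((K + c) ∨ 1))^q] ≤ 2^q (max(1, 1−c))^q + 2 Φ^q exp(−(3/28)Φ), where a ∨ b denotes max(a,b). -/
open MeasureTheory ProbabilityTheory
open scoped ENNReal NNReal

/-- Let `(B_ℓ)` be independent `{0,1}`-valued random variables,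
`Φ = ∑_ℓ E[B_ℓ] ∈ (0,∞)`, and `K = ∑_ℓ B_ℓ`. Then for every real `c` and every `q ≥ 1`,
`E[(Φ / ((K + c) ∨ 1))^q] ≤ 2^q (max(1, 1−c))^q + 2 Φ^q exp(−(3/28)Φ)`. -/
theorem moment_bound_occupancy
    {Ω : Type*} [MeasurableSpace Ω] (P : Measure Ω) [IsProbabilityMeasure P]
    (B : ℕ → Ω → ℝ) (hmeas : ∀ l, Measurable (B l))
    (h01 : ∀ l ω, B l ω = 0 ∨ B l ω = 1)
    (hind : iIndepFun B P)
    (hsum : Summable fun l => ∫ ω, B l ω ∂P)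
    (Φ : ℝ) (hΦdef : Φ = ∑' l, ∫ ω, B l ω ∂P) (hΦpos : 0 < Φ)
    (c q : ℝ) (hq : 1 ≤ q) :
    ∫ ω, (Φ / max ((∑' l, B l ω) + c) 1) ^ q ∂P
      ≤ 2 ^ q * (max 1 (1 - c)) ^ q + 2 * Φ ^ q * Real.exp (-(3 / 28) * Φ) := by
  classical
  set p : ℕ → ℝ := fun l => ∫ ω, B l ω ∂P with hp
  have hB0 : ∀ l ω, 0 ≤ B l ω := fun l ω => by rcases h01 l ω with h | h <;> simp [h]
  have hB1 : ∀ l ω, B l ω ≤ 1 := fun l ω => by rcases h01 l ω with h | h <;> simp [h]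
  have hBint : ∀ l, Integrable (B l) P := fun l =>
    Integrable.mono' (integrable_const 1) (hmeas l).aestronglyMeasurable
      (Filter.Eventually.of_forall fun ω => by
        rw [Real.norm_eq_abs, abs_of_nonneg (hB0 l ω)]; exact hB1 l ω)
  have hp0 : ∀ l, 0 ≤ p l := fun l => integral_nonneg (hB0 l)
  have hp1 : ∀ l, p l ≤ 1 := fun l => by
    have := integral_mono (hBint l) (integrable_const 1) (hB1 l)
    simpa using this
  set K : Ω → ℝ := fun ω => ∑' l, B l ω with hK
  set g : Ω → ℝ≥0∞ := fun ω => ∑' l, ENNReal.ofReal (B l ω) with hg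
  have hcoe : ∀ ω l, ((B l ω).toNNReal : ℝ) = B l ω := fun ω l => Real.coe_toNNReal _ (hB0 l ω)
  have hKg : ∀ ω, K ω = (g ω).toReal := by
    intro ω
    by_cases hs : Summable fun l => B l ω
    · have hs' : Summable fun l => (B l ω).toNNReal := by
        rw [← NNReal.summable_coe]
        simpa only [hcoe ω] using hs
      have : g ω = ((∑' l, (B l ω).toNNReal : ℝ≥0) : ℝ≥0∞) := by
        simp only [hg, ENNReal.ofReal]
        exact (ENNReal.coe_tsum hs').symm
      rw [this, ENNReal.coe_toReal, NNReal.coe_tsum]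
      simp only [hK, hcoe ω]
    · have hs' : ¬ Summable fun l => (B l ω).toNNReal := by
        intro h
        exact hs (by simpa only [hcoe ω] using NNReal.summable_coe.mpr h)
      have : g ω = ∞ := by
        by_contra h
        simp only [hg, ENNReal.ofReal] at h
        exact hs' (ENNReal.tsum_coe_ne_top_iff_summable.mp h)
      rw [this, ENNReal.toReal_top, hK]
      exact tsum_eq_zero_of_not_summable hs
  have hgmeas : Measurable g := Measurable.ennreal_tsum fun l => (hmeas l).ennreal_ofReal
  have hKmeas : Measurable K := by
    have : K = fun ω => (g ω).toReal := funext hKg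
    rw [this]; exact hgmeas.ennreal_toReal
  have hgint : ∫⁻ ω, g ω ∂P = ENNReal.ofReal Φ := by
    rw [hg]
    rw [lintegral_tsum fun l => ((hmeas l).ennreal_ofReal).aemeasurable]
    have : ∀ l, ∫⁻ ω, ENNReal.ofReal (B l ω) ∂P = ENNReal.ofReal (p l) := fun l =>
      (ofReal_integral_eq_lintegral_ofReal (hBint l)
        (Filter.Eventually.of_forall (hB0 l))).symm
    rw [tsum_congr this, ← ENNReal.ofReal_tsum_of_nonneg hp0 hsum, hΦdef]
  have hae_sum : ∀ᵐ ω ∂P, Summable fun l => B l ω := by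
    filter_upwards [ae_lt_top hgmeas (by rw [hgint]; exact ENNReal.ofReal_ne_top)] with ω hω
    have : Summable fun l => (B l ω).toNNReal := by
      apply ENNReal.tsum_coe_ne_top_iff_summable.mp
      simpa only [hg, ENNReal.ofReal] using hω.ne
    simpa only [hcoe ω] using NNReal.summable_coe.mpr this
  -- choose n with partial sum close to Φ
  obtain ⟨n, hn⟩ : ∃ n, 11 / 12 * Φ ≤ ∑ l ∈ Finset.range n, p l := by
    have ht : Filter.Tendsto (fun n => ∑ l ∈ Finset.range n, p l) Filter.atTop (nhds Φ) := by
      rw [hΦdef]; exact hsum.hasSum.tendsto_sum_nat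
    exact (ht.eventually (eventually_ge_nhds (by linarith))).exists
  set t : ℝ := -Real.log 2 with htdef
  have ht0 : t ≤ 0 := neg_nonpos.mpr (Real.log_nonneg one_le_two)
  set Kn : Ω → ℝ := ∑ l ∈ Finset.range n, B l with hKn
  have hKnval : ∀ ω, Kn ω = ∑ l ∈ Finset.range n, B l ω := fun ω => by
    simp [hKn, Finset.sum_apply]
  have hKn0 : ∀ ω, 0 ≤ Kn ω := fun ω => by
    rw [hKnval]; exact Finset.sum_nonneg fun l _ => hB0 l ω
  have hKnmeas : Measurable Kn := by
    rw [show Kn = fun ω => ∑ l ∈ Finset.range n, B l ω from funext hKnval]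
    exact Finset.measurable_sum _ fun l _ => hmeas l
  have h_int_exp : Integrable (fun ω => Real.exp (t * Kn ω)) P := by
    refine Integrable.mono' (integrable_const 1)
      ((hKnmeas.const_mul t).exp).aestronglyMeasurable
      (Filter.Eventually.of_forall fun ω => ?_)
    rw [Real.norm_eq_abs, abs_of_pos (Real.exp_pos _), ← Real.exp_zero]
    exact Real.exp_le_exp.mpr (mul_nonpos_of_nonpos_of_nonneg ht0 (hKn0 ω))
  have hmgf_each : ∀ l, mgf (B l) P t = 1 - p l / 2 := by
    intro l
    have hpt : ∀ ω, Real.exp (t * B l ω) = 1 - B l ω / 2 := by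
      intro ω
      rcases h01 l ω with h | h
      · simp [h]
      · simp only [h, mul_one, htdef]
        rw [Real.exp_neg, Real.exp_log two_pos]; norm_num
    unfold mgf
    rw [integral_congr_ae (Filter.Eventually.of_forall hpt),
      integral_sub (integrable_const 1) ((hBint l).div_const 2), integral_div]
    simp [hp]
  have hmgf : mgf Kn P t = ∏ l ∈ Finset.range n, (1 - p l / 2) := by
    rw [hKn, hind.mgf_sum hmeas]
    exact Finset.prod_congr rfl fun l _ => hmgf_each l
  have hmgf_le : mgf Kn P t ≤ Real.exp (-(∑ l ∈ Finset.range n, p l) / 2) := by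
    rw [hmgf]
    calc ∏ l ∈ Finset.range n, (1 - p l / 2)
        ≤ ∏ l ∈ Finset.range n, Real.exp (-(p l / 2)) := by
          refine Finset.prod_le_prod (fun l _ => by linarith [hp1 l]) fun l _ => ?_
          linarith [Real.add_one_le_exp (-(p l / 2))]
      _ = Real.exp (-(∑ l ∈ Finset.range n, p l) / 2) := by
          rw [← Real.exp_sum]; congr 1
          simp [neg_div, Finset.sum_div]
  have hchern : (P {ω | Kn ω ≤ Φ / 2}).toReal ≤ Real.exp (-(3 / 28) * Φ) := by
    have h1 := measure_le_le_exp_mul_mgf (μ := P) (X := Kn) (Φ / 2) ht0 h_int_exp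
    have h2 : Real.exp (-t * (Φ / 2)) * mgf Kn P t
        ≤ Real.exp (Real.log 2 * (Φ / 2)) * Real.exp (-(∑ l ∈ Finset.range n, p l) / 2) := by
      rw [htdef, neg_neg]
      exact mul_le_mul_of_nonneg_left hmgf_le (Real.exp_pos _).le
    refine h1.trans (h2.trans ?_)
    rw [← Real.exp_add, Real.exp_le_exp]
    nlinarith [Real.log_two_lt_d9, Real.log_two_gt_d9, hΦpos, hn]
  set s : Set Ω := {ω | K ω < Φ / 2} with hsdef
  have hs_meas : MeasurableSet s := measurableSet_lt hKmeas measurable_const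
  have hPs : (P s).toReal ≤ Real.exp (-(3 / 28) * Φ) := by
    refine le_trans (ENNReal.toReal_mono (measure_ne_top _ _) (measure_mono_ae ?_)) hchern
    filter_upwards [hae_sum] with ω hω hmem
    have hle : Kn ω ≤ K ω := by
      rw [hKnval, hK]
      exact hω.sum_le_tsum (Finset.range n) (fun l _ => hB0 l ω)
    exact le_of_lt (lt_of_le_of_lt hle hmem)
  set m : ℝ := max 1 (1 - c) with hm
  have hm1 : (1 : ℝ) ≤ m := le_max_left _ _
  have hq0 : (0 : ℝ) ≤ q := le_trans zero_le_one hq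
  have h_pt : ∀ ω, (Φ / max (K ω + c) 1) ^ q
      ≤ (2 * m) ^ q + Set.indicator s (fun _ => Φ ^ q) ω := by
    intro ω
    have hden1 : (1 : ℝ) ≤ max (K ω + c) 1 := le_max_right _ _
    have hden0 : (0 : ℝ) < max (K ω + c) 1 := lt_of_lt_of_le one_pos hden1
    by_cases hω : Φ / 2 ≤ K ω
    · have hratio : Φ / max (K ω + c) 1 ≤ 2 * m := by
        rw [div_le_iff₀ hden0]
        have h2 : max (Φ / 2 + c) 1 ≤ max (K ω + c) 1 := max_le_max (by linarith) le_rfl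
        have h3 : Φ ≤ 2 * m * max (Φ / 2 + c) 1 := by
          rcases le_or_gt Φ (2 * m) with h | h
          · nlinarith [le_max_right (Φ / 2 + c) 1]
          · have hmc : 1 - c ≤ m := le_max_right _ _
            rw [max_eq_left (by linarith : (1 : ℝ) ≤ Φ / 2 + c)]
            rcases le_or_gt 0 c with hc | hc
            · nlinarith
            · have hmm : m = 1 - c := max_eq_right (by linarith)
              nlinarith
        nlinarith
      have hind0 : Set.indicator s (fun _ => Φ ^ q) ω = 0 :=
        Set.indicator_of_notMem (by simpa [hsdef] using not_lt.mpr hω) _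
      rw [hind0, add_zero]
      exact Real.rpow_le_rpow (div_nonneg hΦpos.le hden0.le) hratio hq0
    · have hind0 : Set.indicator s (fun _ => Φ ^ q) ω = Φ ^ q :=
        Set.indicator_of_mem (by simpa [hsdef] using not_le.mp hω) _
      rw [hind0]
      have hratio : Φ / max (K ω + c) 1 ≤ Φ := div_le_self hΦpos.le hden1
      have h4 := Real.rpow_le_rpow (div_nonneg hΦpos.le hden0.le) hratio hq0
      have h2m : (0 : ℝ) ≤ (2 * m) ^ q := Real.rpow_nonneg (by linarith) q
      linarith
  have hrhs : ∫ ω, ((2 * m) ^ q + Set.indicator s (fun _ => Φ ^ q) ω) ∂P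
      = (2 * m) ^ q + (P s).toReal * Φ ^ q := by
    rw [integral_add (integrable_const _) ((integrable_const _).indicator hs_meas),
      integral_const, integral_indicator_const _ hs_meas]
    simp [smul_eq_mul, mul_comm, Measure.real]
  have hmain : ∫ ω, (Φ / max (K ω + c) 1) ^ q ∂P
      ≤ (2 * m) ^ q + (P s).toReal * Φ ^ q := by
    have h1 : ∫ ω, (Φ / max (K ω + c) 1) ^ q ∂P
        ≤ ∫ ω, ((2 * m) ^ q + Set.indicator s (fun _ => Φ ^ q) ω) ∂P :=
      integral_mono_of_nonneg
        (Filter.Eventually.of_forall fun ω => Real.rpow_nonneg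
          (div_nonneg hΦpos.le (lt_of_lt_of_le one_pos (le_max_right _ _)).le) q)
        ((integrable_const ((2 * m) ^ q)).add ((integrable_const (Φ ^ q)).indicator hs_meas))
        (Filter.Eventually.of_forall h_pt)
    rw [hrhs] at h1; exact h1
  have hΦq : (0 : ℝ) < Φ ^ q := Real.rpow_pos_of_pos hΦpos q
  have h2m : (2 * m) ^ q = 2 ^ q * m ^ q := Real.mul_rpow (by norm_num) (by linarith)
  have hfin : (P s).toReal * Φ ^ q ≤ 2 * Φ ^ q * Real.exp (-(3 / 28) * Φ) := by
    have h5 := mul_le_mul_of_nonneg_right hPs hΦq.le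
    nlinarith [Real.exp_pos (-(3 / 28) * Φ)]
  calc ∫ ω, (Φ / max (K ω + c) 1) ^ q ∂P
      ≤ (2 * m) ^ q + (P s).toReal * Φ ^ q := hmain
    _ ≤ 2 ^ q * m ^ q + 2 * Φ ^ q * Real.exp (-(3 / 28) * Φ) := by rw [h2m]; linarith
end

section
/- For each n ≥ 1, let K_n = ∑_{ℓ=1}^∞ B_{n,ℓ}, where for each fixed n the family (B_{n,ℓ})_{ℓ≥1} consists of independent random variables taking values in {0,1}, and set Φ_n = E[K_n]. Assume that 0 < Φ_n < ∞ for all n, that Φ_n → ∞ as n → ∞, and that K_n/Φ_n → 1 almost surely. Then for every real constant c, Φ_n / ((K_n + c) ∨ 1) → 1 as n → ∞ both almost surely and in L^p for every p ≥ 1. -/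
/-!
The almost sure convergence is elementary, since `K_n / Φ_n → 1` and `Φ_n → ∞`. For `L^p`,
split along the event `K_n ≤ Φ_n / 2`. Off it the ratio `Φ_n / ((K_n + c) ∨ 1)` is eventually at
most `4`, so dominated convergence applies. On it the ratio is at most `Φ_n`, and the Chernoff
bound `E[e^{t K_n}] ≤ exp ((e^t - 1) Φ_n)` for sums of independent `{0,1}`-variables, taken at
`t = -log 2`, gives `P(K_n ≤ Φ_n / 2) ≤ exp (-(1 - log 2) Φ_n / 2)`; so this part contributes
at most `Φ_n^p exp (-(1 - log 2) Φ_n / 2) → 0`.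
-/

open MeasureTheory ProbabilityTheory Filter Real Topology

theorem tendsto_div_max_add_const_one {α : Type*} {l : Filter α} {Φ K : α → ℝ}
    (hΦ : Tendsto Φ l atTop) (hK : Tendsto (fun n => K n / Φ n) l (𝓝 1)) (c : ℝ) :
    Tendsto (fun n => Φ n / max (K n + c) 1) l (𝓝 1) := by
  have hKc : Tendsto (fun n => (K n + c) / Φ n) l (𝓝 1) := by
    simpa [add_div] using hK.add (tendsto_const_nhds.div_atTop hΦ)
  have hKc_top : Tendsto (fun n => K n + c) l atTop := by
    refine (hKc.pos_mul_atTop one_pos hΦ).congr' ?_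
    filter_upwards [hΦ.eventually_gt_atTop 0] with n hn using div_mul_cancel₀ _ hn.ne'
  have hinv := hKc.inv₀ one_ne_zero
  rw [inv_one] at hinv
  refine hinv.congr' ?_
  filter_upwards [hKc_top.eventually_ge_atTop 1] with n hn
  rw [inv_div, max_eq_left hn]

theorem abs_div_max_one_sub_one_le {Φ : ℝ} (hΦ : 1 ≤ Φ) (x : ℝ) : |Φ / max x 1 - 1| ≤ Φ := by
  have h0 : 0 ≤ Φ / max x 1 := div_nonneg (by linarith) (by positivity)
  have h1 : Φ / max x 1 ≤ Φ := div_le_self (by linarith) (le_max_right _ _)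
  exact abs_le.2 ⟨by linarith, by linarith⟩

theorem abs_div_max_add_sub_one_le_three {Φ K c : ℝ} (hΦ : 4 * (|c| + 1) ≤ Φ)
    (hK : Φ / 2 < K) : |Φ / max (K + c) 1 - 1| ≤ 3 := by
  have hc := neg_abs_le c
  have hKc : Φ / 4 ≤ K + c := by linarith
  have h1 : 1 ≤ K + c := by linarith [abs_nonneg c]
  have h4 : Φ / (K + c) ≤ 4 := (div_le_iff₀ (by linarith)).2 (by linarith)
  have h0 : 0 ≤ Φ / (K + c) := div_nonneg (by linarith [abs_nonneg c]) (by linarith)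
  rw [max_eq_left h1]
  exact abs_le.2 ⟨by linarith, by linarith⟩

section

variable {Ω : Type*} [MeasurableSpace Ω] {μ : Measure Ω}

theorem ae_summable_of_summable_integral {ι : Type*} [Countable ι] {Y : ι → Ω → ℝ}
    (hY : ∀ l, Integrable (Y l) μ) (hY0 : ∀ l, 0 ≤ᵐ[μ] Y l)
    (hsum : Summable fun l => ∫ ω, Y l ω ∂μ) :
    ∀ᵐ ω ∂μ, Summable fun l => Y l ω := by
  have hnorm : ∀ l, ∫ ω, ‖Y l ω‖ ∂μ = ∫ ω, Y l ω ∂μ := fun l =>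
    integral_congr_ae <| (hY0 l).mono fun ω hω => Real.norm_of_nonneg hω
  have hfin : ∫⁻ ω, ∑' l, ‖Y l ω‖ₑ ∂μ ≠ ⊤ := by
    rw [lintegral_tsum fun l => (hY l).aemeasurable.enorm]
    simp_rw [← ofReal_integral_norm_eq_lintegral_enorm (hY _), hnorm,
      ← ENNReal.ofReal_tsum_of_nonneg (fun l => integral_nonneg_of_ae (hY0 l)) hsum]
    exact ENNReal.ofReal_ne_top
  filter_upwards [ae_lt_top' (AEMeasurable.tsum fun l => (hY l).aemeasurable.enorm) hfin]
    with ω hω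
  exact (tsum_enorm_ne_top_iff_summable_norm.1 hω.ne).of_norm

theorem integrable_of_zero_or_one [IsFiniteMeasure μ] {Y : Ω → ℝ} (hY : Measurable Y)
    (h01 : ∀ ω, Y ω = 0 ∨ Y ω = 1) : Integrable Y μ :=
  .of_bound hY.aestronglyMeasurable 1 <| ae_of_all _ fun ω => by
    rcases h01 ω with h | h <;> simp [h]

theorem mgf_le_exp_of_zero_or_one [IsProbabilityMeasure μ] {Y : Ω → ℝ} (hY : Measurable Y)
    (h01 : ∀ ω, Y ω = 0 ∨ Y ω = 1) (t : ℝ) : mgf Y μ t ≤ exp ((exp t - 1) * μ[Y]) := by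
  have hlin : (fun ω => exp (t * Y ω)) = fun ω => 1 + (exp t - 1) * Y ω := by
    funext ω; rcases h01 ω with h | h <;> simp [h]
  rw [mgf, hlin,
    integral_add (integrable_const 1) ((integrable_of_zero_or_one hY h01).const_mul _),
    integral_const_mul]
  simpa [add_comm] using add_one_le_exp ((exp t - 1) * μ[Y])

theorem measureReal_sum_le_le_exp [IsProbabilityMeasure μ] {ι : Type*} {X : ι → Ω → ℝ}
    (hmeas : ∀ l, Measurable (X l)) (h01 : ∀ l ω, X l ω = 0 ∨ X l ω = 1) (hind : iIndepFun X μ)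
    (s : Finset ι) (a : ℝ) {t : ℝ} (ht : t ≤ 0) :
    μ.real {ω | ∑ l ∈ s, X l ω ≤ a} ≤ exp (-t * a + (exp t - 1) * ∑ l ∈ s, μ[X l]) := by
  have hint : Integrable (fun ω => exp (t * (∑ l ∈ s, X l) ω)) μ := by
    refine .of_bound (by fun_prop) 1 (ae_of_all _ fun ω => ?_)
    have : 0 ≤ (∑ l ∈ s, X l) ω := by
      rw [Finset.sum_apply]
      exact Finset.sum_nonneg fun l _ => by rcases h01 l ω with h | h <;> simp [h]
    simpa [abs_of_pos (exp_pos _)] using mul_nonpos_of_nonpos_of_nonneg ht this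
  calc μ.real {ω | ∑ l ∈ s, X l ω ≤ a}
      ≤ exp (-t * a) * mgf (∑ l ∈ s, X l) μ t := by
        simpa only [Finset.sum_apply] using measure_le_le_exp_mul_mgf a ht hint
    _ = exp (-t * a) * ∏ l ∈ s, mgf (X l) μ t := by rw [hind.mgf_sum hmeas]
    _ ≤ exp (-t * a) * ∏ l ∈ s, exp ((exp t - 1) * μ[X l]) := by
        gcongr with l
        · exact fun l _ => mgf_nonneg
        · exact mgf_le_exp_of_zero_or_one (hmeas l) (h01 l) t
    _ = exp (-t * a + (exp t - 1) * ∑ l ∈ s, μ[X l]) := by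
        rw [← exp_sum, ← exp_add, Finset.mul_sum]

theorem measureReal_tsum_le_le_exp [IsProbabilityMeasure μ] {Y : ℕ → Ω → ℝ}
    (hmeas : ∀ l, Measurable (Y l)) (h01 : ∀ l ω, Y l ω = 0 ∨ Y l ω = 1) (hind : iIndepFun Y μ)
    (hsum : Summable fun l => μ[Y l]) (a : ℝ) {t : ℝ} (ht : t ≤ 0) :
    μ.real {ω | ∑' l, Y l ω ≤ a} ≤ exp (-t * a + (exp t - 1) * ∑' l, μ[Y l]) := by
  have hY0 : ∀ l ω, 0 ≤ Y l ω := fun l ω => by rcases h01 l ω with h | h <;> simp [h]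
  have hae := ae_summable_of_summable_integral
    (fun l => integrable_of_zero_or_one (hmeas l) (h01 l)) (fun l => ae_of_all _ (hY0 l)) hsum
  have hpartial (N : ℕ) :
      μ.real {ω | ∑' l, Y l ω ≤ a} ≤ μ.real {ω | ∑ l ∈ Finset.range N, Y l ω ≤ a} := by
    refine ENNReal.toReal_mono (measure_ne_top _ _) (measure_mono_ae ?_)
    filter_upwards [hae] with ω hω hle
    exact (hω.sum_le_tsum _ fun l _ => hY0 l ω).trans hle
  have hbound : Tendsto (fun N => exp (-t * a + (exp t - 1) * ∑ l ∈ Finset.range N, μ[Y l]))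
      atTop (𝓝 (exp (-t * a + (exp t - 1) * ∑' l, μ[Y l]))) :=
    (continuous_exp.tendsto _).comp ((hsum.hasSum.tendsto_sum_nat.const_mul _).const_add _)
  exact ge_of_tendsto' hbound fun N =>
    (hpartial N).trans (measureReal_sum_le_le_exp hmeas h01 hind _ a ht)

theorem measureReal_tsum_le_half_le_exp [IsProbabilityMeasure μ] {Y : ℕ → Ω → ℝ}
    (hmeas : ∀ l, Measurable (Y l)) (h01 : ∀ l ω, Y l ω = 0 ∨ Y l ω = 1) (hind : iIndepFun Y μ) :
    μ.real {ω | ∑' l, Y l ω ≤ (∑' l, μ[Y l]) / 2} ≤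
      exp (-((1 - log 2) / 2) * ∑' l, μ[Y l]) := by
  by_cases hsum : Summable fun l => μ[Y l]
  · convert measureReal_tsum_le_le_exp hmeas h01 hind hsum _
      (neg_nonpos.2 (log_nonneg one_le_two)) using 2
    rw [exp_neg, exp_log two_pos]
    ring
  · simp [tsum_eq_zero_of_not_summable hsum]

theorem tendsto_integral_of_tendsto_ae_of_le_indicator [IsFiniteMeasure μ] {f : ℕ → Ω → ℝ}
    {A : ℕ → Set Ω} {C : ℕ → ℝ} {M : ℝ} (hf : ∀ n, AEStronglyMeasurable (f n) μ)
    (hf0 : ∀ n ω, 0 ≤ f n ω) (hlim : ∀ᵐ ω ∂μ, Tendsto (fun n => f n ω) atTop (𝓝 0))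
    (hA : ∀ n, MeasurableSet (A n)) (hM : 0 ≤ M) (hfM : ∀ᶠ n in atTop, ∀ ω ∉ A n, f n ω ≤ M)
    (hfC : ∀ᶠ n in atTop, ∀ ω, f n ω ≤ C n)
    (hCA : Tendsto (fun n => C n * μ.real (A n)) atTop (𝓝 0)) :
    Tendsto (fun n => ∫ ω, f n ω ∂μ) atTop (𝓝 0) := by
  have hmin_le (n : ℕ) (ω : Ω) : ‖min (f n ω) M‖ ≤ M := by
    rw [Real.norm_of_nonneg (le_min (hf0 n ω) hM)]; exact min_le_right _ _
  have hmin_int (n : ℕ) : Integrable (fun ω => min (f n ω) M) μ :=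
    .of_bound ((hf n).inf aestronglyMeasurable_const) M (ae_of_all _ (hmin_le n))
  have hmin : Tendsto (fun n => ∫ ω, min (f n ω) M ∂μ) atTop (𝓝 0) := by
    have hlim_min : ∀ᵐ ω ∂μ, Tendsto (fun n => min (f n ω) M) atTop (𝓝 0) := by
      filter_upwards [hlim] with ω hω
      simpa [min_eq_left hM] using hω.min (tendsto_const_nhds (x := M))
    simpa using tendsto_integral_of_dominated_convergence (f := fun _ => 0) (fun _ => M)
      (fun n => (hmin_int n).1) (integrable_const M) (fun n => ae_of_all _ (hmin_le n))
      hlim_min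
  have hbound : ∀ᶠ n in atTop,
      ∫ ω, f n ω ∂μ ≤ ∫ ω, min (f n ω) M ∂μ + C n * μ.real (A n) := by
    filter_upwards [hfM, hfC] with n hnM hnC
    have hpt (ω : Ω) : f n ω ≤ min (f n ω) M + (A n).indicator (fun _ => C n) ω := by
      by_cases hω : ω ∈ A n
      · simpa [hω] using add_le_add (le_min (hf0 n ω) hM) (hnC ω)
      · simp [hω, hnM ω hω]
    have hf_int : Integrable (f n) μ := .of_bound (hf n) (C n) <| ae_of_all _ fun ω => by
      rw [Real.norm_of_nonneg (hf0 n ω)]; exact hnC ω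
    calc ∫ ω, f n ω ∂μ
        ≤ ∫ ω, (min (f n ω) M + (A n).indicator (fun _ => C n) ω) ∂μ :=
          integral_mono hf_int ((hmin_int n).add ((integrable_const _).indicator (hA n))) hpt
      _ = ∫ ω, min (f n ω) M ∂μ + C n * μ.real (A n) := by
          rw [integral_add (hmin_int n) ((integrable_const _).indicator (hA n)),
            integral_indicator_const _ (hA n), smul_eq_mul, mul_comm]
  have hupper := hmin.add hCA
  rw [add_zero] at hupper
  exact tendsto_of_tendsto_of_tendsto_of_le_of_le' tendsto_const_nhds hupper
    (Eventually.of_forall fun n => integral_nonneg (hf0 n)) hbound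

end

theorem occupancy_ratio_tendsto_one_general
    {Ω : Type*} [MeasurableSpace Ω] (P : Measure Ω) [IsProbabilityMeasure P]
    (B : ℕ → ℕ → Ω → ℝ) (hmeas : ∀ n l, Measurable (B n l))
    (h01 : ∀ n l ω, B n l ω = 0 ∨ B n l ω = 1)
    (hind : ∀ n, iIndepFun (B n) P)
    (Φ : ℕ → ℝ) (hΦdef : ∀ n, Φ n = ∑' l, ∫ ω, B n l ω ∂P)
    (hΦtop : Tendsto Φ atTop atTop)
    (K : ℕ → Ω → ℝ) (hKdef : ∀ n ω, K n ω = ∑' l, B n l ω)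
    (hKas : ∀ᵐ ω ∂P, Tendsto (fun n => K n ω / Φ n) atTop (nhds 1))
    (c : ℝ) :
    (∀ᵐ ω ∂P, Tendsto (fun n => Φ n / max (K n ω + c) 1) atTop (nhds 1)) ∧
      (∀ p : ℝ, 1 ≤ p →
        Tendsto (fun n => ∫ ω, |Φ n / max (K n ω + c) 1 - 1| ^ p ∂P)
          atTop (nhds 0)) := by
  have hAS : ∀ᵐ ω ∂P, Tendsto (fun n => Φ n / max (K n ω + c) 1) atTop (𝓝 1) := by
    filter_upwards [hKas] with ω hω using tendsto_div_max_add_const_one hΦtop hω c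
  refine ⟨hAS, fun p hp => ?_⟩
  have hp0 : 0 < p := by linarith
  have hKmeas (n : ℕ) : Measurable (K n) := by
    rw [funext (hKdef n)]
    exact Measurable.tsum (hmeas n)
  have htail (n : ℕ) : P.real {ω | K n ω ≤ Φ n / 2} ≤ exp (-((1 - log 2) / 2) * Φ n) := by
    simpa only [hKdef, hΦdef] using measureReal_tsum_le_half_le_exp (hmeas n) (h01 n) (hind n)
  have hδ : 0 < (1 - log 2) / 2 := by linarith [log_two_lt_d9]
  have hΦ1 : ∀ᶠ n in atTop, 1 ≤ Φ n := hΦtop.eventually_ge_atTop 1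
  refine tendsto_integral_of_tendsto_ae_of_le_indicator (M := 3 ^ p) (C := fun n => Φ n ^ p)
    (A := fun n => {ω | K n ω ≤ Φ n / 2})
    (fun n => (by fun_prop : Measurable _).aestronglyMeasurable) (fun n ω => by positivity) ?_
    (fun n => measurableSet_le (hKmeas n) measurable_const) (by positivity) ?_ ?_ ?_
  · filter_upwards [hAS] with ω hω
    simpa [zero_rpow hp0.ne'] using (hω.sub_const 1).abs.rpow_const (Or.inr hp0.le)
  · filter_upwards [hΦtop.eventually_ge_atTop (4 * (|c| + 1))] with n hn ω hω
    exact rpow_le_rpow (abs_nonneg _) (abs_div_max_add_sub_one_le_three hn (not_le.1 hω))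
      hp0.le
  · filter_upwards [hΦ1] with n hn ω
    exact rpow_le_rpow (abs_nonneg _) (abs_div_max_one_sub_one_le hn _) hp0.le
  · refine squeeze_zero' ?_ ?_
      ((tendsto_rpow_mul_exp_neg_mul_atTop_nhds_zero p _ hδ).comp hΦtop)
    · filter_upwards [hΦ1] with n hn
      exact mul_nonneg (rpow_nonneg (by linarith) p) measureReal_nonneg
    · filter_upwards [hΦ1] with n hn
      exact mul_le_mul_of_nonneg_left (htail n) (rpow_nonneg (by linarith) p)

/-- For each `n`, let `K_n = ∑_ℓ B_{n,ℓ}` be a sum of independent `{0,1}`-valued random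
variables with mean `Φ_n = E[K_n] ∈ (0,∞)`. Assume `Φ_n → ∞` and `K_n/Φ_n → 1` a.s.
Then for every real `c`, `Φ_n / ((K_n + c) ∨ 1) → 1` almost surely and in `L^p` for
every `p ≥ 1`. -/
theorem occupancy_ratio_tendsto_one
    {Ω : Type*} [MeasurableSpace Ω] (P : Measure Ω) [IsProbabilityMeasure P]
    (B : ℕ → ℕ → Ω → ℝ) (hmeas : ∀ n l, Measurable (B n l))
    (h01 : ∀ n l ω, B n l ω = 0 ∨ B n l ω = 1)
    (hind : ∀ n, iIndepFun (B n) P)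
    (hsum : ∀ n, Summable fun l => ∫ ω, B n l ω ∂P)
    (Φ : ℕ → ℝ) (hΦdef : ∀ n, Φ n = ∑' l, ∫ ω, B n l ω ∂P)
    (hΦpos : ∀ n, 0 < Φ n) (hΦtop : Tendsto Φ atTop atTop)
    (K : ℕ → Ω → ℝ) (hKdef : ∀ n ω, K n ω = ∑' l, B n l ω)
    (hKas : ∀ᵐ ω ∂P, Tendsto (fun n => K n ω / Φ n) atTop (nhds 1))
    (c : ℝ) :
    (∀ᵐ ω ∂P, Tendsto (fun n => Φ n / max (K n ω + c) 1) atTop (nhds 1)) ∧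
      (∀ p : ℝ, 1 ≤ p →
        Tendsto (fun n => ∫ ω, |Φ n / max (K n ω + c) 1 - 1| ^ p ∂P)
          atTop (nhds 0)) :=
  occupancy_ratio_tendsto_one_general P B hmeas h01 hind Φ hΦdef hΦtop K hKdef hKas c
end
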